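/- Let K be a nonempty compact metric space, f ∈ C(K, ℝ), and let μ be a finite signed (real-valued, σ-additive) Borel measure on K such that for every g ∈ C(K, ℝ) one has max_K g − max_K f ≥ ∫_K (g − f) dμ. Then μ is a Borel probability measure concentrated on the arg-maximum set K_f = {t ∈ K : f(t) = max_K f}: namely, μ(A) ≥ 0 for every Borel set A ⊆ K, μ(K) = 1, and μ(K_f) = 1. -/

import Mathlib

/-!
Write `μ = μ⁺ - μ⁻` for the Jordan decomposition. Testing the subgradient inequality at `f + h`
and using subadditivity of `max` gives `∫ h dμ ≤ max h` for every `h ∈ C(K, ℝ)`. Constants `h = ±1`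
give `μ K = 1`, and `h = -φ` with `φ ≥ 0` gives `∫ φ dμ⁻ ≤ ∫ φ dμ⁺`. On a metric space this forces
`μ⁻ ≤ μ⁺` (thickened indicators of closed sets, then inner regularity), and as `μ⁺ ⊥ μ⁻`, `μ⁻ = 0`.
Finally `g = 0` and `h = f` give `∫ f dμ = max f`, so the probability measure `μ` lives on
`{f = max f}`.
-/

open MeasureTheory

/-- The integral of a function against a finite signed Borel measure, defined via the
Jordan decomposition `μ = μ⁺ - μ⁻`. -/
noncomputable def MeasureTheory.SignedMeasure.sintegral {K : Type*} [MeasurableSpace K]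
    (μ : SignedMeasure K) (g : K → ℝ) : ℝ :=
  (∫ t, g t ∂μ.toJordanDecomposition.posPart) -
    (∫ t, g t ∂μ.toJordanDecomposition.negPart)

open Set
open scoped NNReal BoundedContinuousFunction

namespace ContinuousMap

lemma iSup_add_le {K : Type*} [TopologicalSpace K] [CompactSpace K] [Nonempty K]
    (g h : C(K, ℝ)) :
    ⨆ t, g t + h t ≤ (⨆ t, g t) + ⨆ t, h t :=
  ciSup_le fun t => add_le_add (le_ciSup (isCompact_range g.continuous).bddAbove t)
    (le_ciSup (isCompact_range h.continuous).bddAbove t)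

end ContinuousMap

namespace MeasureTheory

section ThickenedIndicator

variable {Ω : Type*} [MeasurableSpace Ω] [PseudoEMetricSpace Ω] {μ ν : Measure Ω}
  [IsFiniteMeasure μ] [IsFiniteMeasure ν]

lemma measureReal_isClosed_le_of_forall_integral_le [OpensMeasurableSpace Ω]
    (h : ∀ g : Ω →ᵇ ℝ≥0, ∫ x, (g x : ℝ) ∂ν ≤ ∫ x, (g x : ℝ) ∂μ) {F : Set Ω}
    (hF : IsClosed F) : ν.real F ≤ μ.real F :=
  le_of_tendsto_of_tendsto'
    (tendsto_integral_thickenedIndicator_of_isClosed ν hF (fun _ => Nat.one_div_pos_of_nat)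
      tendsto_one_div_add_atTop_nhds_zero_nat)
    (tendsto_integral_thickenedIndicator_of_isClosed μ hF (fun _ => Nat.one_div_pos_of_nat)
      tendsto_one_div_add_atTop_nhds_zero_nat)
    fun _ => h _

lemma Measure.le_of_forall_integral_le [BorelSpace Ω]
    (h : ∀ g : Ω →ᵇ ℝ≥0, ∫ x, (g x : ℝ) ∂ν ≤ ∫ x, (g x : ℝ) ∂μ) : ν ≤ μ := by
  refine Measure.le_iff.mpr fun A hA => ENNReal.le_of_forall_pos_le_add fun ε hε _ => ?_
  obtain ⟨F, hFA, hF, hνF⟩ := hA.exists_isClosed_lt_add (measure_ne_top ν A)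
    (ENNReal.coe_ne_zero.mpr hε.ne')
  have hF_le : ν F ≤ μ F :=
    (ENNReal.toReal_le_toReal (measure_ne_top ν F) (measure_ne_top μ F)).mp
      (measureReal_isClosed_le_of_forall_integral_le h hF)
  calc ν A ≤ ν F + ε := hνF.le
    _ ≤ μ A + ε := add_le_add_left (hF_le.trans (measure_mono hFA)) _

end ThickenedIndicator

namespace SignedMeasure

variable {K : Type*} [MeasurableSpace K]

section Sintegral

variable (μ : SignedMeasure K)

lemma apply_eq_real_posPart_sub_real_negPart {A : Set K} (hA : MeasurableSet A) :
    μ A = μ.toJordanDecomposition.posPart.real A - μ.toJordanDecomposition.negPart.real A := by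
  conv_lhs => rw [← μ.toSignedMeasure_toJordanDecomposition]
  exact Measure.toSignedMeasure_sub_apply hA

lemma sintegral_neg (g : K → ℝ) : μ.sintegral (fun t => -g t) = -μ.sintegral g := by
  simp only [sintegral, integral_neg]
  ring

lemma sintegral_const (c : ℝ) : μ.sintegral (fun _ => c) = c * μ univ := by
  simp only [sintegral, integral_const, smul_eq_mul,
    μ.apply_eq_real_posPart_sub_real_negPart MeasurableSet.univ]
  ring

end Sintegral

/-- `μ` is a subgradient at `f` of the convex functional `g ↦ max_K g` on `C(K, ℝ)`. -/
def IsSupSubgradient [TopologicalSpace K] (μ : SignedMeasure K) (f : C(K, ℝ)) : Prop :=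
  ∀ g : C(K, ℝ), μ.sintegral (fun t => g t - f t) ≤ (⨆ t, g t) - ⨆ t, f t

namespace IsSupSubgradient

section Compact

variable [TopologicalSpace K] [CompactSpace K] [Nonempty K] {μ : SignedMeasure K}
  {f : C(K, ℝ)}

lemma sintegral_le_iSup (hμ : μ.IsSupSubgradient f) (h : C(K, ℝ)) :
    μ.sintegral h ≤ ⨆ t, h t := by
  have hfh := hμ (f + h)
  simp only [ContinuousMap.add_apply, add_sub_cancel_left] at hfh
  linarith [ContinuousMap.iSup_add_le f h]

lemma apply_univ (hμ : μ.IsSupSubgradient f) : μ univ = 1 := by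
  have hc (c : ℝ) : c * μ univ ≤ c :=
    calc c * μ univ = μ.sintegral (ContinuousMap.const K c) := (μ.sintegral_const c).symm
      _ ≤ ⨆ _ : K, c := hμ.sintegral_le_iSup _
      _ = c := ciSup_const
  linarith [hc 1, hc (-1)]

lemma sintegral_self (hμ : μ.IsSupSubgradient f) : μ.sintegral f = ⨆ t, f t := by
  have h0 := hμ 0
  simp only [ContinuousMap.zero_apply, zero_sub, sintegral_neg, ciSup_const] at h0
  linarith [hμ.sintegral_le_iSup f]

lemma integral_negPart_le_integral_posPart (hμ : μ.IsSupSubgradient f) {h : C(K, ℝ)}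
    (hh : 0 ≤ h) :
    ∫ t, h t ∂μ.toJordanDecomposition.negPart ≤ ∫ t, h t ∂μ.toJordanDecomposition.posPart := by
  have hneg : -μ.sintegral h ≤ 0 :=
    calc -μ.sintegral h = μ.sintegral (-h) := (μ.sintegral_neg h).symm
      _ ≤ ⨆ t, (-h) t := hμ.sintegral_le_iSup (-h)
      _ ≤ 0 := ciSup_le fun t => neg_nonpos.mpr (hh t)
  rw [sintegral] at hneg
  linarith

end Compact

section CompactMetric

variable [PseudoEMetricSpace K] [CompactSpace K] [Nonempty K] [BorelSpace K]
  {μ : SignedMeasure K} {f : C(K, ℝ)}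

lemma negPart_eq_zero (hμ : μ.IsSupSubgradient f) : μ.toJordanDecomposition.negPart = 0 :=
  Measure.eq_zero_of_absolutelyContinuous_of_mutuallySingular
    (Measure.absolutelyContinuous_of_le <| Measure.le_of_forall_integral_le fun g =>
      hμ.integral_negPart_le_integral_posPart (h := ⟨fun x => g x, by fun_prop⟩) fun x => (g x).2)
    μ.toJordanDecomposition.mutuallySingular.symm

lemma apply_eq_real_posPart (hμ : μ.IsSupSubgradient f) {A : Set K} (hA : MeasurableSet A) :
    μ A = μ.toJordanDecomposition.posPart.real A := by
  rw [μ.apply_eq_real_posPart_sub_real_negPart hA, hμ.negPart_eq_zero, measureReal_zero_apply,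
    sub_zero]

lemma isProbabilityMeasure_posPart (hμ : μ.IsSupSubgradient f) :
    IsProbabilityMeasure μ.toJordanDecomposition.posPart := by
  have h := hμ.apply_univ
  rw [hμ.apply_eq_real_posPart MeasurableSet.univ, measureReal_def,
    ENNReal.toReal_eq_one_iff] at h
  exact ⟨h⟩

lemma ae_eq_iSup (hμ : μ.IsSupSubgradient f) :
    ∀ᵐ t ∂μ.toJordanDecomposition.posPart, f t = ⨆ s, f s := by
  have := hμ.isProbabilityMeasure_posPart
  have hint : ∫ t, f t ∂μ.toJordanDecomposition.posPart = ⨆ s, f s := by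
    have h := hμ.sintegral_self
    rwa [sintegral, hμ.negPart_eq_zero, integral_zero_measure, sub_zero] at h
  refine (integral_eq_iff_of_ae_le
    (f.continuous.integrable_of_hasCompactSupport (.of_compactSpace _)) (integrable_const _)
    (ae_of_all _ fun t => le_ciSup (isCompact_range f.continuous).bddAbove t)).mp ?_
  rw [hint, integral_const, probReal_univ, one_smul]

end CompactMetric

end IsSupSubgradient

end SignedMeasure

end MeasureTheory

/-- If a finite signed Borel measure `μ` on a nonempty compact metric
space `K` satisfies the subgradient inequality `max g - max f ≥ ∫ (g - f) dμ` for all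
`g ∈ C(K, ℝ)`, then `μ` is a probability measure concentrated on the arg-maximum set of
`f`: `μ A ≥ 0` for every Borel set `A`, `μ K = 1`, and `μ K_f = 1`. -/
theorem signedMeasure_subgradient_is_probability_on_argmax
    {K : Type*} [MetricSpace K] [CompactSpace K] [Nonempty K]
    [MeasurableSpace K] [BorelSpace K]
    (f : C(K, ℝ)) (μ : SignedMeasure K)
    (hsub : ∀ g : C(K, ℝ),
      (⨆ t, g t) - (⨆ t, f t) ≥ μ.sintegral (fun t => g t - f t)) :
    (∀ A : Set K, MeasurableSet A → 0 ≤ μ A) ∧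
      μ Set.univ = 1 ∧ μ {t | f t = ⨆ s, f s} = 1 := by
  have hμ : μ.IsSupSubgradient f := hsub
  have := hμ.isProbabilityMeasure_posPart
  have hargmax : MeasurableSet {t | f t = ⨆ s, f s} :=
    measurableSet_eq_fun f.continuous.measurable measurable_const
  refine ⟨fun A hA => (hμ.apply_eq_real_posPart hA).symm ▸ measureReal_nonneg, hμ.apply_univ, ?_⟩
  rw [hμ.apply_eq_real_posPart hargmax, measureReal_def,
    (ae_iff_measure_eq hargmax.nullMeasurableSet).mp hμ.ae_eq_iSup, measure_univ,
    ENNReal.toReal_one]
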